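/- Let M be a matrix in GL₅(ℂ) of finite order whose characteristic polynomial has coefficients in ℤ[ω] and is a product of cyclotomic polynomials, and which is congruent to (x+1)(x−1)⁴ modulo the ideal (1−ω) of ℤ[ω]. Then the order of M divides 18. -/

import Mathlib

/-!
An integer divisible by `1 - ω` in `ℤ[ω]` is divisible by `3`, so the congruence says that
`∏ Φₙ = (X + 1)(X - 1)⁴` in `𝔽₃[X]`. Write `n = 3ᵃm` with `3 ∤ m`: over `𝔽̄₃` the roots of `Φₙ` are
primitive `m`-th roots of unity, which must be `±1`, so `m ∣ 2`; and `φ(n) ≤ 5 < φ(27)` forces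
`a ≤ 2`. Hence every eigenvalue of `M` is an 18th root of unity. As `M` has finite order, its
minimal polynomial divides some `X ^ k - 1` and is therefore squarefree, so it divides `X ^ 18 - 1`.
-/

open Polynomial

namespace IsPrimitiveRoot

variable {K : Type*} [Field K] {ω : K}

theorem sq_add_self_add_one (hω : IsPrimitiveRoot ω 3) : ω ^ 2 + ω + 1 = 0 := by
  simpa [cyclotomic_three] using hω.isRoot_cyclotomic (by norm_num)

theorem exists_int_add_int_mul_of_mem_adjoin (hω : IsPrimitiveRoot ω 3) {z : K}
    (hz : z ∈ Algebra.adjoin ℤ {ω}) : ∃ a b : ℤ, z = a + b * ω := by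
  induction hz using Algebra.adjoin_induction with
  | mem x hx => exact ⟨0, 1, by simp_all⟩
  | algebraMap r => exact ⟨r, 0, by simp⟩
  | add x y _ _ hx hy =>
    obtain ⟨a, b, rfl⟩ := hx
    obtain ⟨c, d, rfl⟩ := hy
    exact ⟨a + c, b + d, by push_cast; ring⟩
  | mul x y _ _ hx hy =>
    obtain ⟨a, b, rfl⟩ := hx
    obtain ⟨c, d, rfl⟩ := hy
    exact ⟨a * c - b * d, a * d + b * c - b * d, by
      push_cast; linear_combination (b * d : K) * hω.sq_add_self_add_one⟩

theorem int_eq_zero_of_add_int_mul_eq_zero [CharZero K] (hω : IsPrimitiveRoot ω 3) {u v : ℤ}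
    (h : (u : K) + v * ω = 0) : u = 0 ∧ v = 0 := by
  -- multiply by the conjugate `u + v ω²` to get the norm
  have hnorm : ((u ^ 2 - u * v + v ^ 2 : ℤ) : K) = 0 := by
    push_cast
    linear_combination (u + v * ω ^ 2) * h - (u * v + v ^ 2 * (ω - 1)) * hω.sq_add_self_add_one
  have hnorm' : u ^ 2 - u * v + v ^ 2 = 0 := by exact_mod_cast hnorm
  constructor <;> nlinarith [sq_nonneg (u - v), sq_nonneg u, sq_nonneg v]

theorem three_dvd_of_intCast_eq_one_sub_mul [CharZero K] (hω : IsPrimitiveRoot ω 3) {c : ℤ}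
    {z : K} (hz : z ∈ Algebra.adjoin ℤ {ω}) (h : (c : K) = (1 - ω) * z) : 3 ∣ c := by
  obtain ⟨a, b, rfl⟩ := hω.exists_int_add_int_mul_of_mem_adjoin hz
  -- `(1 - ω)(a + bω) = (a + b) + (2b - a)ω`
  obtain ⟨h₁, h₂⟩ := hω.int_eq_zero_of_add_int_mul_eq_zero (u := a + b - c) (v := 2 * b - a)
    (by push_cast; linear_combination b * hω.sq_add_self_add_one - h)
  exact ⟨b, by omega⟩

theorem map_zmod_three_eq_zero [CharZero K] (hω : IsPrimitiveRoot ω 3) {f : ℤ[X]} {q : K[X]}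
    (hq : ∀ i, q.coeff i ∈ Algebra.adjoin ℤ {ω})
    (hf : f.map (Int.castRingHom K) = C (1 - ω) * q) :
    f.map (Int.castRingHom (ZMod 3)) = 0 := by
  ext i
  have hi := congrArg (coeff · i) hf
  simp only [coeff_map, coeff_C_mul, eq_intCast] at hi
  simpa [ZMod.intCast_zmod_eq_zero_iff_dvd] using hω.three_dvd_of_intCast_eq_one_sub_mul (hq i) hi

end IsPrimitiveRoot

theorem Polynomial.map_multiset_prod_cyclotomic {R S : Type*} [CommRing R] [CommRing S]
    (f : R →+* S) (l : Multiset ℕ) :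
    (l.map fun n => cyclotomic n R).prod.map f = (l.map fun n => cyclotomic n S).prod := by
  simp [Polynomial.map_multiset_prod, Multiset.map_map, map_cyclotomic]

theorem Polynomial.dvd_of_cyclotomic_prime_pow_mul_dvd {K : Type*} [Field K] {p : ℕ}
    [Fact p.Prime] [CharP K p] {a m k j : ℕ} (hm : ¬ p ∣ m)
    (h : cyclotomic (p ^ a * m) K ∣ (X ^ k - 1) ^ j) : m ∣ k := by
  have : NeZero (m : AlgebraicClosure K) := ⟨by rwa [Ne, CharP.cast_eq_zero_iff _ p]⟩
  have hdeg : (cyclotomic (p ^ a * m) (AlgebraicClosure K)).degree ≠ 0 := by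
    have hm0 : m ≠ 0 := by rintro rfl; exact hm (dvd_zero p)
    rw [degree_cyclotomic]
    exact_mod_cast (Nat.totient_pos.2 (Nat.pos_of_ne_zero
      (mul_ne_zero (pow_ne_zero a (Fact.out : p.Prime).ne_zero) hm0))).ne'
  obtain ⟨β, hβ⟩ := IsAlgClosed.exists_root _ hdeg
  have hβm : IsPrimitiveRoot β m := isRoot_cyclotomic_prime_pow_mul_iff_of_charP.1 hβ
  have hmap := Polynomial.map_dvd (algebraMap K (AlgebraicClosure K)) h
  rw [map_cyclotomic] at hmap
  have hβk := eval_eq_zero_of_dvd_of_eval_eq_zero hmap hβ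
  simp only [Polynomial.map_pow, Polynomial.map_sub, Polynomial.map_X, Polynomial.map_one,
    eval_pow, eval_sub, eval_X, eval_one] at hβk
  exact hβm.dvd_of_pow_eq_one k (sub_eq_zero.1 (eq_zero_of_pow_eq_zero hβk))

open Nat in
theorem dvd_eighteen_of_cyclotomic_dvd {n : ℕ} (hn : n ≠ 0)
    (h : cyclotomic n (ZMod 3) ∣ (X + 1) * (X - 1) ^ 4) : n ∣ 18 := by
  have : Fact (Nat.Prime 3) := ⟨Nat.prime_three⟩
  obtain ⟨a, m, hm, rfl⟩ := Nat.exists_eq_pow_mul_and_not_dvd hn 3 (by norm_num)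
  have hm2 : m ∣ 2 :=
    dvd_of_cyclotomic_prime_pow_mul_dvd (j := 4) hm (h.trans ⟨(X + 1) ^ 3, by ring⟩)
  have hφ : φ (3 ^ a * m) ≤ 5 := by
    have hne : ((X + 1) * (X - 1) ^ 4 : (ZMod 3)[X]) ≠ 0 := by
      simpa using ((monic_X_add_C (1 : ZMod 3)).mul ((monic_X_sub_C (1 : ZMod 3)).pow 4)).ne_zero
    refine (natDegree_cyclotomic (3 ^ a * m) (ZMod 3)).symm.le.trans
      ((natDegree_le_of_dvd h hne).trans ?_)
    compute_degree!
  have ha : a ≤ 2 := by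
    by_contra! ha
    have h27 : φ (3 ^ 3) ∣ φ (3 ^ a * m) :=
      totient_dvd_of_dvd (dvd_mul_of_dvd_left (pow_dvd_pow 3 ha) _)
    rw [totient_prime_pow (by norm_num) (by norm_num)] at h27
    have hle := le_of_dvd (totient_pos.2 (Nat.pos_of_ne_zero hn)) h27
    omega
  exact Nat.mul_dvd_mul (pow_dvd_pow 3 ha) hm2

theorem IsOfFinOrder.pow_eq_one_of_aeval_eq_zero_of_dvd {K R : Type*} [Field K] [CharZero K]
    [Ring R] [Algebra K R] {A : R} (hA : IsOfFinOrder A) {p : K[X]} (hp : aeval A p = 0)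
    {m j : ℕ} (h : p ∣ (X ^ m - 1) ^ j) : A ^ m = 1 := by
  obtain ⟨k, hk, hAk⟩ := hA.exists_pow_eq_one
  have hsep : (minpoly K A).Separable :=
    (separable_X_pow_sub_C 1 (by exact_mod_cast hk.ne') one_ne_zero).of_dvd
      (minpoly.dvd_iff.2 (by simp [hAk]))
  have hdvd := hsep.squarefree.isRadical j _ ((minpoly.dvd K A hp).trans h)
  simpa [sub_eq_zero] using minpoly.dvd_iff.1 hdvd

theorem stmt14_general (ω : ℂ) (hω : IsPrimitiveRoot ω 3)
    (M : Matrix.GeneralLinearGroup (Fin 5) ℂ) (hfin : IsOfFinOrder M)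
    (l : Multiset ℕ)
    (hcyc : (M : Matrix (Fin 5) (Fin 5) ℂ).charpoly =
      (l.map fun n => cyclotomic n ℂ).prod)
    (q : Polynomial ℂ) (hq : ∀ i, q.coeff i ∈ Algebra.adjoin ℤ ({ω} : Set ℂ))
    (hcong : (M : Matrix (Fin 5) (Fin 5) ℂ).charpoly - (X + 1) * (X - 1) ^ 4 =
      C (1 - ω) * q) :
    orderOf M ∣ 18 := by
  have hmod3 : (l.map fun n => cyclotomic n (ZMod 3)).prod = (X + 1) * (X - 1) ^ 4 := by
    have hzero := hω.map_zmod_three_eq_zero hq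
      (f := (l.map fun n => cyclotomic n ℤ).prod - (X + 1) * (X - 1) ^ 4)
      (by simpa [map_multiset_prod_cyclotomic, hcyc] using hcong)
    simpa [sub_eq_zero, map_multiset_prod_cyclotomic] using hzero
  have h18 : ∀ n ∈ l, cyclotomic n ℂ ∣ X ^ 18 - 1 := by
    intro n hn
    obtain rfl | hn0 := eq_or_ne n 0
    · simp
    refine (cyclotomic.dvd_X_pow_sub_one n ℂ).trans (dvd_pow_sub_one_of_dvd
      (dvd_eighteen_of_cyclotomic_dvd hn0 ?_))
    exact hmod3 ▸ Multiset.dvd_prod (Multiset.mem_map_of_mem _ hn)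
  have hchar : (M : Matrix (Fin 5) (Fin 5) ℂ).charpoly ∣ (X ^ 18 - 1) ^ Multiset.card l := by
    rw [hcyc, ← Multiset.prod_replicate, ← Multiset.map_const']
    exact Multiset.prod_dvd_prod_of_dvd _ _ h18
  have hfin' : IsOfFinOrder (M : Matrix (Fin 5) (Fin 5) ℂ) := Units.isOfFinOrder_val.2 hfin
  rw [orderOf_dvd_iff_pow_eq_one]
  exact Units.ext <| hfin'.pow_eq_one_of_aeval_eq_zero_of_dvd (Matrix.aeval_self_charpoly _) hchar

theorem stmt14 (ω : ℂ) (hω : IsPrimitiveRoot ω 3)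
    (M : Matrix.GeneralLinearGroup (Fin 5) ℂ) (hfin : IsOfFinOrder M)
    (l : Multiset ℕ) (hl : ∀ n ∈ l, n ≠ 0)
    (hcyc : (M : Matrix (Fin 5) (Fin 5) ℂ).charpoly =
      (l.map fun n => cyclotomic n ℂ).prod)
    (q : Polynomial ℂ) (hq : ∀ i, q.coeff i ∈ Algebra.adjoin ℤ ({ω} : Set ℂ))
    (hcong : (M : Matrix (Fin 5) (Fin 5) ℂ).charpoly - (X + 1) * (X - 1) ^ 4 =
      C (1 - ω) * q) :
    orderOf M ∣ 18 :=
  stmt14_general ω hω M hfin l hcyc q hq hcong
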